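/- For every n ≥ 0: E[(f_n(1, σ³(n)) − θ/2)(f_n(2, σ³(n)) − θ/2)] = (θ/2)·y_{n;θ} − (θ/(1−θ))·(v_{n;θ} − (θ/2)·x_{n;θ}). -/

import Mathlib

open Finset Filter

namespace Broadcast

/-- The root distribution `π = (θ/2, θ/2, (1-θ)/2, (1-θ)/2)`. -/
noncomputable def rootDist (θ : ℝ) (i : Fin 4) : ℝ :=
  if (i : ℕ) < 2 then θ / 2 else (1 - θ) / 2

/-- The transition matrix `P i j = λ · 1{i=j} + (1-λ) π_j`. -/
noncomputable def trans (θ lam : ℝ) (i j : Fin 4) : ℝ :=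
  (if i = j then lam else 0) + (1 - lam) * rootDist θ j

/-- Vertices at level `n` of the infinite rooted `d`-ary tree, encoded as paths. -/
abbrev Vtx (d n : ℕ) := Fin n → Fin d

/-- Configurations (assignments of states) on level `n`. -/
abbrev Config (d n : ℕ) := Vtx d n → Fin 4

/-- Restriction of a level-`(n+1)` configuration to the subtree of the `j`-th child
of the root. -/
def restrict {d n : ℕ} (j : Fin d) (A : Config d (n + 1)) : Config d n :=
  fun p => A (Fin.cons j p)

/-- `lik θ λ d n i A` is the probability of observing the configuration `A` on level `n`,
given that the root is in state `i` (the broadcasting process). -/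
noncomputable def lik (θ lam : ℝ) (d : ℕ) : (n : ℕ) → Fin 4 → Config d n → ℝ
  | 0, i, A => if A Fin.elim0 = i then 1 else 0
  | n + 1, i, A =>
      ∏ j : Fin d, ∑ k : Fin 4, trans θ lam i k * lik θ lam d n k (restrict j A)

/-- Unconditional probability of observing the configuration `A` on level `n`. -/
noncomputable def marg (θ lam : ℝ) (d n : ℕ) (A : Config d n) : ℝ :=
  ∑ i : Fin 4, rootDist θ i * lik θ lam d n i A

/-- The posterior `f_n(i, A) = P(σ_ρ = i ∣ σ(n) = A)`. -/
noncomputable def post (θ lam : ℝ) (d n : ℕ) (i : Fin 4) (A : Config d n) : ℝ :=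
  rootDist θ i * lik θ lam d n i A / marg θ lam d n A

/-- Expectation of `g(σ(n))` conditioned on the root being in state `r`,
i.e. `E g(σ^r(n))`. -/
noncomputable def condE (θ lam : ℝ) (d n : ℕ) (r : Fin 4) (g : Config d n → ℝ) : ℝ :=
  ∑ A : Config d n, lik θ lam d n r A * g A

/-- Unconditional expectation of `g(σ(n))`. -/
noncomputable def uncondE (θ lam : ℝ) (d n : ℕ) (g : Config d n → ℝ) : ℝ :=
  ∑ A : Config d n, marg θ lam d n A * g A

/-- `x_{n;θ} = E f_n(1, σ¹(n)) - θ/2`. -/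
noncomputable def xT (θ lam : ℝ) (d n : ℕ) : ℝ :=
  condE θ lam d n 0 (fun A => post θ lam d n 0 A) - θ / 2

/-- `y_{n;θ} = E f_n(2, σ¹(n)) - θ/2`. -/
noncomputable def yT (θ lam : ℝ) (d n : ℕ) : ℝ :=
  condE θ lam d n 0 (fun A => post θ lam d n 1 A) - θ / 2

/-- `z_{n;θ} = E f_n(1, σ³(n)) - θ/2`. -/
noncomputable def zT (θ lam : ℝ) (d n : ℕ) : ℝ :=
  condE θ lam d n 2 (fun A => post θ lam d n 0 A) - θ / 2

/-- `x_{n;1-θ} = E f_n(3, σ³(n)) - (1-θ)/2`. -/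
noncomputable def xH (θ lam : ℝ) (d n : ℕ) : ℝ :=
  condE θ lam d n 2 (fun A => post θ lam d n 2 A) - (1 - θ) / 2

/-- `y_{n;1-θ} = E f_n(4, σ³(n)) - (1-θ)/2`. -/
noncomputable def yH (θ lam : ℝ) (d n : ℕ) : ℝ :=
  condE θ lam d n 2 (fun A => post θ lam d n 3 A) - (1 - θ) / 2

/-- `z_{n;1-θ} = E f_n(3, σ¹(n)) - (1-θ)/2`. -/
noncomputable def zH (θ lam : ℝ) (d n : ℕ) : ℝ :=
  condE θ lam d n 0 (fun A => post θ lam d n 2 A) - (1 - θ) / 2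

/-- `u_{n;θ} = E (f_n(1, σ¹(n)) - θ/2)²`. -/
noncomputable def uT (θ lam : ℝ) (d n : ℕ) : ℝ :=
  condE θ lam d n 0 (fun A => (post θ lam d n 0 A - θ / 2) ^ 2)

/-- `v_{n;θ} = E (f_n(2, σ¹(n)) - θ/2)²`. -/
noncomputable def vT (θ lam : ℝ) (d n : ℕ) : ℝ :=
  condE θ lam d n 0 (fun A => (post θ lam d n 1 A - θ / 2) ^ 2)

/-- `w_{n;θ} = E (f_n(1, σ³(n)) - θ/2)²`. -/
noncomputable def wT (θ lam : ℝ) (d n : ℕ) : ℝ :=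
  condE θ lam d n 2 (fun A => (post θ lam d n 0 A - θ / 2) ^ 2)

/-- `w_{n;1-θ} = E (f_n(3, σ¹(n)) - (1-θ)/2)²`. -/
noncomputable def wH (θ lam : ℝ) (d n : ℕ) : ℝ :=
  condE θ lam d n 0 (fun A => (post θ lam d n 2 A - (1 - θ) / 2) ^ 2)

/-- `Y_{ij}(n) = f_n(i, σ_j(n+1))`, viewed as a function of the level-`(n+1)`
configuration. -/
noncomputable def Yf (θ lam : ℝ) (d n : ℕ) (i : Fin 4) (j : Fin d)
    (A : Config d (n + 1)) : ℝ :=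
  post θ lam d n i (restrict j A)

/-- `Z_i(n)`, viewed as a function of the level-`(n+1)` configuration. -/
noncomputable def Zf (θ lam : ℝ) (d n : ℕ) (i : Fin 4) (A : Config d (n + 1)) : ℝ :=
  if (i : ℕ) < 2 then
    ∏ j : Fin d, (1 + (2 * lam / θ) * (Yf θ lam d n i j A - θ / 2))
  else
    ∏ j : Fin d, (1 + (2 * lam / (1 - θ)) * (Yf θ lam d n i j A - (1 - θ) / 2))

/-- `S = (θ/2)Z₁ + (θ/2)Z₂ + ((1-θ)/2)Z₃ + ((1-θ)/2)Z₄`. -/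
noncomputable def Sf (θ lam : ℝ) (d n : ℕ) (A : Config d (n + 1)) : ℝ :=
  θ / 2 * Zf θ lam d n 0 A + θ / 2 * Zf θ lam d n 1 A
    + (1 - θ) / 2 * Zf θ lam d n 2 A + (1 - θ) / 2 * Zf θ lam d n 3 A

/-- Total variation distance between the laws of `σ^i(n)` and `σ^j(n)`. -/
noncomputable def dTV (θ lam : ℝ) (d n : ℕ) (i j : Fin 4) : ℝ :=
  (∑ A : Config d n, |lik θ lam d n i A - lik θ lam d n j A|) / 2

/-- The model is reconstructible if for some pair of root states the total variation
distance between the conditioned level-`n` configurations does not vanish. -/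
def Reconstructible (θ lam : ℝ) (d : ℕ) : Prop :=
  ∃ i j : Fin 4, 0 < Filter.limsup (fun n => dTV θ lam d n i j) Filter.atTop

/-- Probability that the root is in state `i` and the states at the vertices
`v 1, …, v k ∈ L(M)` are `c 1, …, c k`. -/
noncomputable def jointRootEvent (θ lam : ℝ) (d M k : ℕ) (v : Fin k → Vtx d M)
    (c : Fin k → Fin 4) (i : Fin 4) : ℝ :=
  ∑ A : Config d M,
    if ∀ t, A (v t) = c t then rootDist θ i * lik θ lam d M i A else 0

/-- Conditional probability `P(σ_ρ = i ∣ σ_{v t} = c t, 1 ≤ t ≤ k)`. -/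
noncomputable def condRoot (θ lam : ℝ) (d M k : ℕ) (v : Fin k → Vtx d M)
    (c : Fin k → Fin 4) (i : Fin 4) : ℝ :=
  jointRootEvent θ lam d M k v c i / ∑ i' : Fin 4, jointRootEvent θ lam d M k v c i'

/-! Write `δᵢ = f_n(i, ·) − πᵢ` and `E` for the unconditional expectation. Bayes' rule
`E(fᵢ g) = πᵢ E g(σⁱ)` turns every conditional moment into an unconditional one, and the
relabellings `1 ↔ 2` and `3 ↔ 4`, which fix `π`, leave the model invariant. Averaging the
root states in `E(δ₁δ₂) = Σᵢ πᵢ E(δ₁δ₂)(σⁱ)` and using `σ³ ~ σ⁴` gives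
`(1 − θ) E(δ₁δ₂)(σ³) = (1 − θ) E(δ₁δ₂) − E(δ₁²δ₂) − E(δ₁δ₂²)`, while
`E(δ₁δ₂) = (θ/2) y`, `E δ₁² = (θ/2) x` and `E(δ₁²δ₂) = E(δ₁δ₂²) = (θ/2)(v − (θ/2) x)`. -/

section Model

variable {θ lam : ℝ} {d : ℕ}

theorem rootDist_zero : rootDist θ 0 = θ / 2 := rfl

theorem rootDist_one : rootDist θ 1 = θ / 2 := rfl

theorem rootDist_two : rootDist θ 2 = (1 - θ) / 2 := rfl

theorem rootDist_three : rootDist θ 3 = (1 - θ) / 2 := rfl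

theorem rootDist_pos (hθ : θ ∈ Set.Ioo (0 : ℝ) 1) (i : Fin 4) : 0 < rootDist θ i := by
  unfold rootDist
  split <;> linarith [hθ.1, hθ.2]

theorem sum_rootDist (θ : ℝ) : ∑ i, rootDist θ i = 1 := by
  rw [Fin.sum_univ_four, rootDist_zero, rootDist_one, rootDist_two, rootDist_three]
  ring

theorem sum_trans (θ lam : ℝ) (i : Fin 4) : ∑ j, trans θ lam i j = 1 := by
  simp only [trans, sum_add_distrib, ← mul_sum, sum_rootDist, sum_ite_eq, mem_univ, if_true]
  ring

theorem rootDist_swap_zero_one (θ : ℝ) (i : Fin 4) :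
    rootDist θ (Equiv.swap 0 1 i) = rootDist θ i := by
  fin_cases i <;> rfl

theorem rootDist_swap_two_three (θ : ℝ) (i : Fin 4) :
    rootDist θ (Equiv.swap 2 3 i) = rootDist θ i := by
  fin_cases i <;> rfl

def configSuccEquiv (d n : ℕ) : Config d (n + 1) ≃ (Fin d → Config d n) where
  toFun A j := restrict j A
  invFun B p := B (p 0) (Fin.tail p)
  left_inv A := by
    funext p
    simp [restrict, Fin.cons_self_tail]
  right_inv B := by
    funext j p
    simp [restrict]

theorem restrict_configSuccEquiv_symm {n : ℕ} (B : Fin d → Config d n) (j : Fin d) :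
    restrict j ((configSuccEquiv d n).symm B) = B j :=
  congrFun ((configSuccEquiv d n).apply_symm_apply B) j

theorem lik_nonneg (hP : ∀ i j, 0 ≤ trans θ lam i j) :
    ∀ (n : ℕ) (i : Fin 4) (A : Config d n), 0 ≤ lik θ lam d n i A
  | 0, i, A => by unfold lik; split <;> norm_num
  | n + 1, i, A => prod_nonneg fun j _ => sum_nonneg fun k _ =>
      mul_nonneg (hP i k) (lik_nonneg hP n k _)

theorem sum_lik (θ lam : ℝ) (d : ℕ) :
    ∀ (n : ℕ) (i : Fin 4), ∑ A : Config d n, lik θ lam d n i A = 1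
  | 0, i => by
    rw [← (Equiv.funUnique (Vtx d 0) (Fin 4)).symm.sum_comp]
    simp [lik]
  | n + 1, i => by
    rw [← (configSuccEquiv d n).symm.sum_comp]
    simp only [lik, restrict_configSuccEquiv_symm]
    rw [← Fintype.prod_sum fun (_ : Fin d) (B : Config d n) =>
      ∑ k, trans θ lam i k * lik θ lam d n k B]
    simp only [sum_comm (γ := Config d n), ← mul_sum, sum_lik θ lam d n, mul_one, sum_trans,
      prod_const_one]

theorem lik_perm (e : Equiv.Perm (Fin 4)) (he : ∀ i, rootDist θ (e i) = rootDist θ i) :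
    ∀ (n : ℕ) (i : Fin 4) (A : Config d n), lik θ lam d n (e i) (e ∘ A) = lik θ lam d n i A
  | 0, i, A => by simp [lik]
  | n + 1, i, A => by
    refine prod_congr rfl fun j _ => (Fintype.sum_equiv e _ _ fun k => ?_).symm
    have htrans : trans θ lam (e i) (e k) = trans θ lam i k := by simp [trans, he]
    rw [htrans]
    exact congrArg _ (lik_perm e he n k (restrict j A)).symm

theorem marg_perm (e : Equiv.Perm (Fin 4)) (he : ∀ i, rootDist θ (e i) = rootDist θ i)
    {n : ℕ} (A : Config d n) : marg θ lam d n (e ∘ A) = marg θ lam d n A :=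
  (Fintype.sum_equiv e _ _ fun i => by rw [he, lik_perm e he]).symm

theorem post_perm (e : Equiv.Perm (Fin 4)) (he : ∀ i, rootDist θ (e i) = rootDist θ i)
    {n : ℕ} (i : Fin 4) (A : Config d n) :
    post θ lam d n (e i) (e ∘ A) = post θ lam d n i A := by
  rw [post, post, he, lik_perm e he, marg_perm e he]

theorem condE_perm (e : Equiv.Perm (Fin 4)) (he : ∀ i, rootDist θ (e i) = rootDist θ i)
    {n : ℕ} (i : Fin 4) (g : Config d n → ℝ) :
    condE θ lam d n (e i) g = condE θ lam d n i (fun A => g (e ∘ A)) := by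
  rw [condE, ← (Equiv.piCongrRight fun _ => e).sum_comp]
  exact sum_congr rfl fun A _ => by
    change lik θ lam d n (e i) (e ∘ A) * g (e ∘ A) = _
    rw [lik_perm e he]

theorem uncondE_perm (e : Equiv.Perm (Fin 4)) (he : ∀ i, rootDist θ (e i) = rootDist θ i)
    {n : ℕ} (g : Config d n → ℝ) :
    uncondE θ lam d n g = uncondE θ lam d n (fun A => g (e ∘ A)) := by
  rw [uncondE, ← (Equiv.piCongrRight fun _ => e).sum_comp]
  exact sum_congr rfl fun A _ => by
    change marg θ lam d n (e ∘ A) * g (e ∘ A) = _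
    rw [marg_perm e he]

theorem condE_const {n : ℕ} (i : Fin 4) (c : ℝ) : condE θ lam d n i (fun _ => c) = c := by
  rw [condE, ← sum_mul, sum_lik, one_mul]

theorem condE_sub_const {n : ℕ} (i : Fin 4) (g : Config d n → ℝ) (c : ℝ) :
    condE θ lam d n i (fun A => g A - c) = condE θ lam d n i g - c := by
  simp only [condE, mul_sub, sum_sub_distrib]
  rw [← sum_mul, sum_lik, one_mul]

theorem uncondE_eq_sum_condE {n : ℕ} (g : Config d n → ℝ) :
    uncondE θ lam d n g = ∑ i, rootDist θ i * condE θ lam d n i g := by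
  simp only [uncondE, condE, marg, sum_mul, mul_sum]
  rw [sum_comm]
  exact sum_congr rfl fun i _ => sum_congr rfl fun A _ => mul_assoc _ _ _

theorem uncondE_const {n : ℕ} (c : ℝ) : uncondE θ lam d n (fun _ => c) = c := by
  simp only [uncondE_eq_sum_condE, condE_const, ← sum_mul, sum_rootDist, one_mul]

theorem marg_mul_post (hθ : θ ∈ Set.Ioo (0 : ℝ) 1) (hP : ∀ i j, 0 ≤ trans θ lam i j)
    {n : ℕ} (i : Fin 4) (A : Config d n) :
    marg θ lam d n A * post θ lam d n i A = rootDist θ i * lik θ lam d n i A := by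
  by_cases hM : marg θ lam d n A = 0
  · have hlik := (sum_eq_zero_iff_of_nonneg fun j _ =>
      mul_nonneg (rootDist_pos hθ j).le (lik_nonneg hP n j A)).mp hM
    rw [hM, zero_mul, hlik i (mem_univ i)]
  · exact mul_div_cancel₀ _ hM

theorem uncondE_post_mul (hθ : θ ∈ Set.Ioo (0 : ℝ) 1) (hP : ∀ i j, 0 ≤ trans θ lam i j)
    {n : ℕ} (i : Fin 4) (g : Config d n → ℝ) :
    uncondE θ lam d n (fun A => post θ lam d n i A * g A)
      = rootDist θ i * condE θ lam d n i g := by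
  rw [uncondE, condE, mul_sum]
  exact sum_congr rfl fun A _ => by rw [← mul_assoc, marg_mul_post hθ hP, mul_assoc]

end Model

noncomputable def centeredPost (θ lam : ℝ) (d n : ℕ) (i : Fin 4) (A : Config d n) : ℝ :=
  post θ lam d n i A - rootDist θ i

section CenteredPosterior

variable {θ lam : ℝ} {d n : ℕ}

theorem centeredPost_perm (e : Equiv.Perm (Fin 4)) (he : ∀ i, rootDist θ (e i) = rootDist θ i)
    (i : Fin 4) (A : Config d n) :
    centeredPost θ lam d n (e i) (e ∘ A) = centeredPost θ lam d n i A := by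
  rw [centeredPost, centeredPost, post_perm e he, he]

theorem condE_centeredPost (i j : Fin 4) :
    condE θ lam d n i (centeredPost θ lam d n j)
      = condE θ lam d n i (post θ lam d n j) - rootDist θ j :=
  condE_sub_const i _ _

theorem uncondE_centeredPost_mul (hθ : θ ∈ Set.Ioo (0 : ℝ) 1)
    (hP : ∀ i j, 0 ≤ trans θ lam i j) (i : Fin 4) (g : Config d n → ℝ) :
    uncondE θ lam d n (fun A => centeredPost θ lam d n i A * g A)
      = rootDist θ i * (condE θ lam d n i g - uncondE θ lam d n g) := by
  rw [mul_sub, ← uncondE_post_mul hθ hP, uncondE, uncondE, uncondE, mul_sum, ← sum_sub_distrib]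
  exact sum_congr rfl fun A _ => by rw [centeredPost]; ring

theorem uncondE_centeredPost (hθ : θ ∈ Set.Ioo (0 : ℝ) 1) (hP : ∀ i j, 0 ≤ trans θ lam i j)
    (i : Fin 4) : uncondE θ lam d n (centeredPost θ lam d n i) = 0 := by
  simpa [condE_const, uncondE_const] using uncondE_centeredPost_mul hθ hP i (fun _ => 1)

theorem centeredPost_swap_zero_one (A : Config d n) :
    centeredPost θ lam d n 0 (Equiv.swap 0 1 ∘ A) = centeredPost θ lam d n 1 A ∧
      centeredPost θ lam d n 1 (Equiv.swap 0 1 ∘ A) = centeredPost θ lam d n 0 A :=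
  ⟨centeredPost_perm _ (rootDist_swap_zero_one θ) 1 A,
    centeredPost_perm _ (rootDist_swap_zero_one θ) 0 A⟩

theorem centeredPost_swap_two_three (A : Config d n) :
    centeredPost θ lam d n 0 (Equiv.swap 2 3 ∘ A) = centeredPost θ lam d n 0 A ∧
      centeredPost θ lam d n 1 (Equiv.swap 2 3 ∘ A) = centeredPost θ lam d n 1 A :=
  ⟨centeredPost_perm _ (rootDist_swap_two_three θ) 0 A,
    centeredPost_perm _ (rootDist_swap_two_three θ) 1 A⟩

theorem uncondE_centeredPost_mul_centeredPost (hθ : θ ∈ Set.Ioo (0 : ℝ) 1)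
    (hP : ∀ i j, 0 ≤ trans θ lam i j) :
    uncondE θ lam d n (fun A => centeredPost θ lam d n 0 A * centeredPost θ lam d n 1 A)
      = θ / 2 * yT θ lam d n := by
  rw [uncondE_centeredPost_mul hθ hP, uncondE_centeredPost hθ hP, sub_zero, rootDist_zero,
    condE_centeredPost, rootDist_one, yT]

theorem uncondE_centeredPost_sq (hθ : θ ∈ Set.Ioo (0 : ℝ) 1)
    (hP : ∀ i j, 0 ≤ trans θ lam i j) :
    uncondE θ lam d n (fun A => centeredPost θ lam d n 0 A ^ 2) = θ / 2 * xT θ lam d n := by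
  simp only [sq]
  rw [uncondE_centeredPost_mul hθ hP, uncondE_centeredPost hθ hP, sub_zero, rootDist_zero,
    condE_centeredPost, rootDist_zero, xT]

theorem uncondE_centeredPost_one_sq :
    uncondE θ lam d n (fun A => centeredPost θ lam d n 1 A ^ 2)
      = uncondE θ lam d n (fun A => centeredPost θ lam d n 0 A ^ 2) := by
  rw [uncondE_perm _ (rootDist_swap_zero_one θ)]
  simp only [(centeredPost_swap_zero_one _).2]

theorem uncondE_centeredPost_one_mul_cross (hθ : θ ∈ Set.Ioo (0 : ℝ) 1)
    (hP : ∀ i j, 0 ≤ trans θ lam i j) :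
    uncondE θ lam d n (fun A => centeredPost θ lam d n 1 A *
        (centeredPost θ lam d n 0 A * centeredPost θ lam d n 1 A))
      = θ / 2 * (vT θ lam d n - θ / 2 * xT θ lam d n) := by
  have h := uncondE_centeredPost_mul hθ hP 0 (fun A => centeredPost θ lam d n 1 A ^ 2)
  rw [uncondE_centeredPost_one_sq, uncondE_centeredPost_sq hθ hP, rootDist_zero] at h
  convert h using 2
  · ext A
    ring
  · rfl

theorem uncondE_centeredPost_zero_mul_cross :
    uncondE θ lam d n (fun A => centeredPost θ lam d n 0 A *
        (centeredPost θ lam d n 0 A * centeredPost θ lam d n 1 A))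
      = uncondE θ lam d n (fun A => centeredPost θ lam d n 1 A *
        (centeredPost θ lam d n 0 A * centeredPost θ lam d n 1 A)) := by
  rw [uncondE_perm _ (rootDist_swap_zero_one θ)]
  simp only [(centeredPost_swap_zero_one _).1, (centeredPost_swap_zero_one _).2, mul_comm]

theorem condE_three_centeredPost_mul :
    condE θ lam d n 3 (fun A => centeredPost θ lam d n 0 A * centeredPost θ lam d n 1 A)
      = condE θ lam d n 2 (fun A => centeredPost θ lam d n 0 A * centeredPost θ lam d n 1 A) := by
  rw [show (3 : Fin 4) = Equiv.swap 2 3 2 from rfl, condE_perm _ (rootDist_swap_two_three θ)]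
  simp only [(centeredPost_swap_two_three _).1, (centeredPost_swap_two_three _).2]

theorem one_sub_mul_condE_two_centeredPost_mul (hθ : θ ∈ Set.Ioo (0 : ℝ) 1)
    (hP : ∀ i j, 0 ≤ trans θ lam i j) :
    (1 - θ) * condE θ lam d n 2
        (fun A => centeredPost θ lam d n 0 A * centeredPost θ lam d n 1 A)
      = (1 - θ) * (θ / 2 * yT θ lam d n) - θ * (vT θ lam d n - θ / 2 * xT θ lam d n) := by
  set g := fun A => centeredPost θ lam d n 0 A * centeredPost θ lam d n 1 A with hg
  have htotal := uncondE_eq_sum_condE (θ := θ) (lam := lam) g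
  rw [Fin.sum_univ_four, rootDist_zero, rootDist_one, rootDist_two, rootDist_three,
    condE_three_centeredPost_mul, ← hg] at htotal
  have h0 := uncondE_centeredPost_mul hθ hP 0 g
  have h1 := uncondE_centeredPost_mul hθ hP 1 g
  rw [uncondE_centeredPost_zero_mul_cross, uncondE_centeredPost_one_mul_cross hθ hP,
    rootDist_zero] at h0
  rw [uncondE_centeredPost_one_mul_cross hθ hP, rootDist_one] at h1
  rw [uncondE_centeredPost_mul_centeredPost hθ hP] at htotal h0 h1
  linear_combination h0 + h1 - htotal

end CenteredPosterior

theorem cross_moment_12_root3_general (θ lam : ℝ) (hθ : θ ∈ Set.Ioo (0 : ℝ) 1)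
    (hP : ∀ i j : Fin 4, 0 ≤ trans θ lam i j) (d : ℕ) (n : ℕ) :
    condE θ lam d n 2
        (fun A => (post θ lam d n 0 A - θ / 2) * (post θ lam d n 1 A - θ / 2))
      = θ / 2 * yT θ lam d n - θ / (1 - θ) * (vT θ lam d n - θ / 2 * xT θ lam d n) := by
  have h1θ : 1 - θ ≠ 0 := sub_ne_zero.2 hθ.2.ne'
  have key := one_sub_mul_condE_two_centeredPost_mul (d := d) (n := n) hθ hP
  refine mul_left_cancel₀ h1θ (key.trans ?_)
  field_simp

/-- `E(f_n(1,σ³(n))-θ/2)(f_n(2,σ³(n))-θ/2)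
= (θ/2)y_{n;θ} - (θ/(1-θ))(v_{n;θ} - (θ/2)x_{n;θ})`. -/
theorem cross_moment_12_root3 (θ lam : ℝ) (hθ : θ ∈ Set.Ioo (0 : ℝ) 1) (hlam : |lam| ≤ 1)
    (hP : ∀ i j : Fin 4, 0 ≤ trans θ lam i j) (d : ℕ) (hd : 2 ≤ d) (n : ℕ) :
    condE θ lam d n 2
        (fun A => (post θ lam d n 0 A - θ / 2) * (post θ lam d n 1 A - θ / 2))
      = θ / 2 * yT θ lam d n - θ / (1 - θ) * (vT θ lam d n - θ / 2 * xT θ lam d n) :=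
  cross_moment_12_root3_general θ lam hθ hP d n

end Broadcast
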